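/- (Equality case of the weighted Wirtinger inequality.) If h ∈ E and ∫₀^{π/2} (h(t)² − (1/2) h'(t)²) cos t dt = 0, then there exists a real constant c such that h(t) = c sin t for all t ∈ [0, π/2]. -/

import Mathlib

open Real MeasureTheory Set

/-- `h` belongs to the class `E` of functions of class `C^{1,1}` on `[0, π/2]`
(continuously differentiable with Lipschitz continuous derivative) satisfying
`h 0 = 0` and `h' (π/2) = 0`; the function `h'` is the derivative of `h` on `[0, π/2]`. -/
structure MemE (h h' : ℝ → ℝ) : Prop where
  hasDeriv : ∀ t ∈ Icc (0:ℝ) (π/2), HasDerivWithinAt h (h' t) (Icc (0:ℝ) (π/2)) t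
  lipschitz : ∃ K : NNReal, LipschitzOnWith K h' (Icc (0:ℝ) (π/2))
  h_zero : h 0 = 0
  h'_pi_div_two : h' (π/2) = 0

/-!
On `(0, π/2)` one has the pointwise identity
`(½ h'² - h²) cos t - (h² cos² t / (2 sin t))'
  = (h' sin t - h cos t)² cos t / (2 sin² t) ≥ 0`.
Hence `P t = ∫₀ᵗ (½ h'² - h²) cos - h² cos² t / (2 sin t)` is nondecreasing on
`[0, π/2]`.
The hypothesis gives `P (π/2) = 0`, and `P 0 = 0` because `|h t| ≤ K t` forces the boundary
term to vanish at `0`. So `P` is constant, its derivative vanishes, i.e. the Wronskian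
`h' sin - h cos` vanishes and `h / sin` is constant on `(0, π/2]`.
-/

open Filter Topology

lemma sin_pos_of_mem_Ioc_zero_pi_div_two {x : ℝ} (hx : x ∈ Ioc 0 (π/2)) : 0 < sin x :=
  sin_pos_of_mem_Ioo ⟨hx.1, hx.2.trans_lt (half_lt_self pi_pos)⟩

lemma eq_zero_of_hasDerivAt_nonneg_of_eq {f g : ℝ → ℝ} {a b : ℝ}
    (hf : ContinuousOn f (Icc a b)) (hd : ∀ x ∈ Ioo a b, HasDerivAt f (g x) x)
    (hg : ∀ x ∈ Ioo a b, 0 ≤ g x) (hab : f a = f b) : ∀ x ∈ Ioo a b, g x = 0 := by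
  intro x hx
  have hmono : MonotoneOn f (Icc a b) := by
    refine monotoneOn_of_hasDerivWithinAt_nonneg (convex_Icc a b) hf (fun y hy => ?_)
      (fun y hy => hg y (by rwa [interior_Icc] at hy))
    rw [interior_Icc] at hy ⊢
    exact (hd y hy).hasDerivWithinAt
  have hconst : EqOn f (fun _ => f a) (Ioo a b) := fun y hy =>
    le_antisymm
      (hab ▸ hmono (Ioo_subset_Icc_self hy) (right_mem_Icc.2 (hy.1.trans hy.2).le) hy.2.le)
      (hmono (left_mem_Icc.2 (hy.1.trans hy.2).le) (Ioo_subset_Icc_self hy) hy.1.le)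
  exact (hd x hx).unique <| (hasDerivAt_const x (f a)).congr_of_eventuallyEq
    (hconst.eventuallyEq_of_mem (Ioo_mem_nhds hx.1 hx.2))

lemma exists_abs_le_mul_of_hasDerivWithinAt {h h' : ℝ → ℝ} {b : ℝ}
    (hd : ∀ t ∈ Icc 0 b, HasDerivWithinAt h (h' t) (Icc 0 b) t)
    (hc : ContinuousOn h' (Icc 0 b)) (h0 : h 0 = 0) :
    ∃ K, ∀ t ∈ Icc 0 b, |h t| ≤ K * t := by
  obtain ⟨K, hK⟩ := isCompact_Icc.exists_bound_of_continuousOn hc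
  refine ⟨K, fun t ht => ?_⟩
  simpa [h0] using norm_image_sub_le_of_norm_deriv_le_segment' hd
    (fun x hx => hK x (Ico_subset_Icc_self hx)) t ht

/-- At `t = 0` this is `0` (division by `sin 0 = 0`), which is also its limit there. -/
noncomputable def wirtingerCorrection (h : ℝ → ℝ) (t : ℝ) : ℝ :=
  h t ^ 2 * cos t ^ 2 / (2 * sin t)

noncomputable def wirtingerDefect (h h' : ℝ → ℝ) (t : ℝ) : ℝ :=
  (h' t * sin t - h t * cos t) ^ 2 * cos t / (2 * sin t ^ 2)

lemma wirtingerDefect_nonneg (h h' : ℝ → ℝ) {t : ℝ} (ht : t ∈ Icc (-(π/2)) (π/2)) :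
    0 ≤ wirtingerDefect h h' t := by
  have := cos_nonneg_of_mem_Icc ht
  unfold wirtingerDefect
  positivity

lemma wronskian_eq_zero_of_wirtingerDefect_eq_zero {h h' : ℝ → ℝ} {x : ℝ}
    (hx : x ∈ Ioo 0 (π/2)) (hD : wirtingerDefect h h' x = 0) :
    h' x * sin x = h x * cos x := by
  have hs := (sin_pos_of_mem_Ioc_zero_pi_div_two (Ioo_subset_Ioc_self hx)).ne'
  have hc := (cos_pos_of_mem_Ioo ⟨by linarith [hx.1, pi_pos], hx.2⟩).ne'
  simpa [wirtingerDefect, hs, hc, sub_eq_zero] using hD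

lemma hasDerivAt_wirtingerCorrection {h h' : ℝ → ℝ} {x : ℝ} (hd : HasDerivAt h (h' x) x)
    (hs : sin x ≠ 0) :
    HasDerivAt (wirtingerCorrection h)
      (((1/2) * h' x ^ 2 - h x ^ 2) * cos x - wirtingerDefect h h' x) x := by
  have H : HasDerivAt (fun t => h t ^ 2 * cos t ^ 2 / (2 * sin t)) _ x :=
    ((hd.pow 2).mul ((hasDerivAt_cos x).pow 2)).div ((hasDerivAt_sin x).const_mul 2)
      (mul_ne_zero two_ne_zero hs)
  refine (H : HasDerivAt (wirtingerCorrection h) _ x).congr_deriv ?_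
  simp only [wirtingerDefect, Pi.pow_apply, Pi.mul_apply]
  field_simp
  ring

lemma abs_wirtingerCorrection_le {h : ℝ → ℝ} {K t : ℝ} (ht : t ∈ Ioc 0 (π/2))
    (hK : |h t| ≤ K * t) : |wirtingerCorrection h t| ≤ K ^ 2 * π / 4 * t := by
  have hsin : 2 / π * t ≤ sin t := mul_le_sin ht.1.le ht.2
  have hpos : 0 < 2 / π * t := by have := ht.1; positivity
  have hsq : h t ^ 2 ≤ (K * t) ^ 2 := sq_le_sq' (abs_le.1 hK).1 (abs_le.1 hK).2
  unfold wirtingerCorrection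
  rw [abs_of_nonneg (by have := hpos.trans_le hsin; positivity)]
  calc h t ^ 2 * cos t ^ 2 / (2 * sin t) ≤ (K * t) ^ 2 * 1 / (2 * (2 / π * t)) := by
        gcongr
        exact cos_sq_le_one t
    _ = K ^ 2 * π / 4 * t := by field_simp; ring

lemma continuousOn_wirtingerCorrection {h : ℝ → ℝ} {K : ℝ}
    (hc : ContinuousOn h (Icc 0 (π/2))) (hK : ∀ t ∈ Icc 0 (π/2), |h t| ≤ K * t) :
    ContinuousOn (wirtingerCorrection h) (Icc 0 (π/2)) := by
  intro t ht
  rcases ht.1.eq_or_lt with rfl | hpos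
  · have hlin : Tendsto (fun x : ℝ => K ^ 2 * π / 4 * x) (𝓝[Icc 0 (π/2)] 0) (𝓝 0) :=
      ((continuous_const_mul _).tendsto' 0 0 (mul_zero _)).mono_left nhdsWithin_le_nhds
    have hF0 : wirtingerCorrection h 0 = 0 := by simp [wirtingerCorrection]
    rw [ContinuousWithinAt, hF0]
    refine squeeze_zero_norm' (eventually_nhdsWithin_of_forall fun x hx => ?_) hlin
    rcases hx.1.eq_or_lt with rfl | hx0
    · simp [hF0]
    · exact abs_wirtingerCorrection_le ⟨hx0, hx.2⟩ (hK x hx)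
  · exact ((hc t ht).pow 2 |>.mul (continuous_cos.continuousWithinAt.pow 2)).div
      (continuous_sin.continuousWithinAt.const_mul 2)
      (mul_ne_zero two_ne_zero (sin_pos_of_mem_Ioc_zero_pi_div_two ⟨hpos, ht.2⟩).ne')

lemma wirtingerDefect_eq_zero {h h' : ℝ → ℝ}
    (hd : ∀ t ∈ Icc 0 (π/2), HasDerivWithinAt h (h' t) (Icc 0 (π/2)) t)
    (hc : ContinuousOn h' (Icc 0 (π/2))) (h0 : h 0 = 0)
    (hF : ∫ t in (0:ℝ)..(π/2), (h t ^ 2 - (1/2) * h' t ^ 2) * cos t = 0) :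
    ∀ x ∈ Ioo 0 (π/2), wirtingerDefect h h' x = 0 := by
  set A : ℝ → ℝ := fun t => ((1/2) * h' t ^ 2 - h t ^ 2) * cos t
  have hhc : ContinuousOn h (Icc 0 (π/2)) := fun t ht => (hd t ht).continuousWithinAt
  have hAc : ContinuousOn A (Icc 0 (π/2)) :=
    ((continuousOn_const.mul (hc.pow 2)).sub (hhc.pow 2)).mul continuous_cos.continuousOn
  have hA0 : ∫ t in (0:ℝ)..(π/2), A t = 0 := by
    simp only [A, show ∀ t, ((1/2) * h' t ^ 2 - h t ^ 2) * cos t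
      = -((h t ^ 2 - (1/2) * h' t ^ 2) * cos t) from fun t => by ring,
      intervalIntegral.integral_neg, hF, neg_zero]
  obtain ⟨K, hK⟩ := exists_abs_le_mul_of_hasDerivWithinAt hd hc h0
  refine eq_zero_of_hasDerivAt_nonneg_of_eq
    (f := fun t => (∫ s in (0:ℝ)..t, A s) - wirtingerCorrection h t) ?_ (fun x hx => ?_)
    (fun x hx => wirtingerDefect_nonneg h h' ⟨by linarith [hx.1, pi_pos], hx.2.le⟩) ?_
  · have hprim := intervalIntegral.continuousOn_primitive_interval
      (μ := volume) (a := 0) (b := π/2) (f := A)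
      (by rw [uIcc_of_le pi_div_two_pos.le]; exact hAc.integrableOn_Icc)
    rw [uIcc_of_le pi_div_two_pos.le] at hprim
    exact hprim.sub (continuousOn_wirtingerCorrection hhc hK)
  · have hxd : HasDerivAt h (h' x) x :=
      (hd x (Ioo_subset_Icc_self hx)).hasDerivAt (Icc_mem_nhds hx.1 hx.2)
    have hint : HasDerivAt (fun t => ∫ s in (0:ℝ)..t, A s) (A x) x :=
      intervalIntegral.integral_hasDerivAt_right
        (hAc.mono (by rw [uIcc_of_le hx.1.le]; exact Icc_subset_Icc_right hx.2.le)
          |>.intervalIntegrable)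
        ((hAc.mono Ioo_subset_Icc_self).stronglyMeasurableAtFilter isOpen_Ioo x hx)
        (hAc.continuousAt (Icc_mem_nhds hx.1 hx.2))
    refine (hint.sub (hasDerivAt_wirtingerCorrection hxd
      (sin_pos_of_mem_Ioc_zero_pi_div_two (Ioo_subset_Ioc_self hx)).ne')).congr_deriv ?_
    simp only [A]
    ring
  · simp [wirtingerCorrection, hA0]

lemma eq_mul_sin_of_deriv_mul_sin_eq {h h' : ℝ → ℝ}
    (hd : ∀ t ∈ Icc 0 (π/2), HasDerivWithinAt h (h' t) (Icc 0 (π/2)) t) (h0 : h 0 = 0)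
    (hw : ∀ x ∈ Ioo 0 (π/2), h' x * sin x = h x * cos x) :
    ∀ t ∈ Icc 0 (π/2), h t = h (π/2) * sin t := by
  intro t ht
  rcases ht.1.eq_or_lt with rfl | ht0
  · simp [h0]
  have hsin : ∀ x ∈ Icc t (π/2), sin x ≠ 0 := fun x hx =>
    (sin_pos_of_mem_Ioc_zero_pi_div_two ⟨ht0.trans_le hx.1, hx.2⟩).ne'
  have hc : ContinuousOn h (Icc t (π/2)) := fun x hx =>
    ((hd x ⟨ht.1.trans hx.1, hx.2⟩).continuousWithinAt).mono (Icc_subset_Icc_left ht.1)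
  have hconst := constant_of_has_deriv_right_zero (hc.div continuous_sin.continuousOn hsin)
    (fun x hx => ?_) (π/2) (right_mem_Icc.2 ht.2)
  · rw [Pi.div_apply, Pi.div_apply, sin_pi_div_two, div_one] at hconst
    rw [hconst, div_mul_cancel₀ _ (hsin t (left_mem_Icc.2 ht.2))]
  · have hx' : x ∈ Ioo 0 (π/2) := ⟨ht0.trans_le hx.1, hx.2⟩
    have hq := ((hd x (Ioo_subset_Icc_self hx')).hasDerivAt (Icc_mem_nhds hx'.1 hx'.2)).div
      (hasDerivAt_sin x) (hsin x (Ico_subset_Icc_self hx))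
    rw [hw x hx', sub_self, zero_div] at hq
    exact hq.hasDerivWithinAt

theorem weighted_wirtinger_equality (h h' : ℝ → ℝ) (hE : MemE h h')
    (hF : ∫ t in (0:ℝ)..(π/2), (h t ^ 2 - (1/2) * h' t ^ 2) * Real.cos t = 0) :
    ∃ c : ℝ, ∀ t ∈ Icc (0:ℝ) (π/2), h t = c * Real.sin t := by
  obtain ⟨hd, ⟨K, hlip⟩, h0, -⟩ := hE
  have hD := wirtingerDefect_eq_zero hd hlip.continuousOn h0 hF
  exact ⟨h (π/2), eq_mul_sin_of_deriv_mul_sin_eq hd h0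
    fun x hx => wronskian_eq_zero_of_wirtingerDefect_eq_zero hx (hD x hx)⟩
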